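/- Let H be a finite simple graph without isolated vertices with vertex set {v_1,…,v_z}, let G be a finite simple graph, let h : G → H be a graph homomorphism (an H-colouring of G), and let s_1,…,s_z be signatures, where every vertex w of G carries the signature s_i with h(w) = v_i. For i ∈ {1,…,z} set n_i = #{w ∈ V(G) : h(w) = v_i}. Then Holant(G,h,s⃗) = ∏_{i=1}^z s_i(0)^{n_i} · ∑_{σ⃗} #Emb_cp(H↿σ⃗ → (G,h)) · ∏_{i=1}^z ∏_{B ∈ σ⃗(v_i)} s_i(|B|)/s_i(0), where the sum is over all fractures σ⃗ of H. -/

import Mathlib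

open Finset

/-- `P` is a set partition of the finite set `s`. -/
def IsPartitionOf {α : Type*} [DecidableEq α] (s : Finset α) (P : Finset (Finset α)) : Prop :=
  ∅ ∉ P ∧ (∀ B ∈ P, B ⊆ s) ∧ ∀ a ∈ s, ∃! B, B ∈ P ∧ a ∈ B

variable {VH VG : Type*} [Fintype VH] [DecidableEq VH] [Fintype VG] [DecidableEq VG]

/-- The set `E_H(v)` of edges of `H` incident to `v`. -/
def incEdges (H : SimpleGraph VH) [DecidableRel H.Adj] (v : VH) : Finset (Sym2 VH) :=
  H.edgeFinset.filter fun e => v ∈ e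

open Classical in
/-- The finset of all fractures of `H`: tuples assigning to each vertex `v` a set
partition of the edges of `H` incident to `v`. -/
noncomputable def fracturesFinset (H : SimpleGraph VH) [DecidableRel H.Adj] :
    Finset (VH → Finset (Finset (Sym2 VH))) :=
  (Fintype.piFinset fun v => (incEdges H v).powerset.powerset).filter fun σ =>
    ∀ v, IsPartitionOf (incEdges H v) (σ v)

/-- The fractured graph `H ↿ σ⃗`: vertices are the pairs `(v, B)` with `B ∈ σ⃗(v)`, and
`(u, B)`, `(v, B')` are adjacent iff `{u,v}` is an edge of `H` contained in both `B` and
`B'`. -/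
def Fractured (H : SimpleGraph VH) (σ : VH → Finset (Finset (Sym2 VH))) :
    SimpleGraph {p : VH × Finset (Sym2 VH) // p.2 ∈ σ p.1} where
  Adj p q := H.Adj p.1.1 q.1.1 ∧
    Sym2.mk p.1.1 q.1.1 ∈ p.1.2 ∧ Sym2.mk p.1.1 q.1.1 ∈ q.1.2
  symm := by
    constructor
    rintro p q ⟨h1, h2, h3⟩
    refine ⟨h1.symm, ?_, ?_⟩
    · rw [show Sym2.mk q.1.1 p.1.1 = Sym2.mk p.1.1 q.1.1 from Sym2.eq_swap]
      exact h3
    · rw [show Sym2.mk q.1.1 p.1.1 = Sym2.mk p.1.1 q.1.1 from Sym2.eq_swap]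
      exact h2
  loopless := ⟨fun p hp => H.loopless.irrefl p.1.1 hp.1⟩

/-- `A ⊆ E(G)` is colourful w.r.t. the `H`-colouring `h`: the map `e ↦ h(e)` restricts to
a bijection from `A` onto `E(H)`. -/
def Colourful (H : SimpleGraph VH) (h : VG → VH) (A : Finset (Sym2 VG)) : Prop :=
  Set.BijOn (Sym2.map h) ↑A H.edgeSet

open Classical in
/-- `Holant(G, h, s⃗) = ∑_{A colourful} ∏_{w ∈ V(G)} s_{h(w)}(|A ∩ E(w)|)`. -/
noncomputable def holant (G : SimpleGraph VG) [DecidableRel G.Adj] (H : SimpleGraph VH)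
    (h : VG → VH) (s : VH → ℕ → ℂ) : ℂ :=
  ∑ A ∈ G.edgeFinset.powerset.filter (Colourful H h),
    ∏ w : VG, s (h w) ((A.filter fun e => w ∈ e).card)

/-- `#Emb_cp(H↿σ⃗ → (G,h))`: the number of injective graph homomorphisms from the fractured
graph to `G` that are colour-prescribed, i.e. `h(φ(v,B)) = v`. -/
noncomputable def embCP (H : SimpleGraph VH) (σ : VH → Finset (Finset (Sym2 VH)))
    (G : SimpleGraph VG) (h : VG → VH) : ℕ :=
  Nat.card {φ : {p : VH × Finset (Sym2 VH) // p.2 ∈ σ p.1} → VG //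
    Function.Injective φ ∧
      (∀ x y, (Fractured H σ).Adj x y → G.Adj (φ x) (φ y)) ∧ ∀ x, h (φ x) = x.1.1}

/-! For a colourful edge set `A`, the block `h(A ∩ E(w))` at a vertex `w` of `G` is a set of
`H`-edges at `h(w)` of the same size as `A ∩ E(w)`. Blocks at distinct vertices of the same
colour are disjoint and the nonempty ones partition `E_H(v)`, so `A` induces a fracture `σ⃗`.
Conversely, sending `(v, B)` to the unique vertex carrying the block `B` is a colour-prescribed
embedding of `H↿σ⃗` whose image edges are exactly `A`, and every such embedding arises this way.
So the colourful sets inducing `σ⃗` are counted by `#Emb_cp(H↿σ⃗ → (G,h))`, while the weight of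
such a set depends only on `σ⃗`: a vertex with empty block contributes `s_v(0)`, one with block
`B` contributes `s_v(|B|)`. -/

namespace IsPartitionOf

variable {α : Type*} [DecidableEq α] {s : Finset α} {P : Finset (Finset α)}

lemma eq_of_mem_of_mem (hP : IsPartitionOf s P) {B B' : Finset α} (hB : B ∈ P) (hB' : B' ∈ P)
    {a : α} (ha : a ∈ B) (ha' : a ∈ B') : B = B' := by
  obtain ⟨C, -, hC⟩ := hP.2.2 a (hP.2.1 B hB ha)
  rw [hC B ⟨hB, ha⟩, hC B' ⟨hB', ha'⟩]

lemma exists_mem (hP : IsPartitionOf s P) {a : α} (ha : a ∈ s) : ∃ B ∈ P, a ∈ B :=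
  (hP.2.2 a ha).exists

end IsPartitionOf

section Fracture

variable {V : Type*} [Fintype V] [DecidableEq V] {H : SimpleGraph V} [DecidableRel H.Adj]
  {σ : V → Finset (Finset (Sym2 V))}

lemma mem_incEdges {v : V} {f : Sym2 V} : f ∈ incEdges H v ↔ f ∈ H.edgeSet ∧ v ∈ f := by
  simp [incEdges]

def IsFracture (H : SimpleGraph V) [DecidableRel H.Adj] (σ : V → Finset (Finset (Sym2 V))) : Prop :=
  ∀ v, IsPartitionOf (incEdges H v) (σ v)

open Classical in
lemma mem_fracturesFinset : σ ∈ fracturesFinset H ↔ IsFracture H σ := by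
  refine ⟨fun hσ => (mem_filter.1 hσ).2, fun hσ => mem_filter.2 ⟨?_, hσ⟩⟩
  exact Fintype.mem_piFinset.2 fun v => mem_powerset.2 fun B hB => mem_powerset.2 ((hσ v).2.1 B hB)

namespace IsFracture

variable (hσ : IsFracture H σ)
include hσ

lemma vertex_eq {x x' : {p : V × Finset (Sym2 V) // p.2 ∈ σ p.1}} (hv : x.1.1 = x'.1.1)
    {f : Sym2 V} (hf : f ∈ x.1.2) (hf' : f ∈ x'.1.2) : x = x' := by
  obtain ⟨⟨v, B⟩, hB⟩ := x
  obtain ⟨⟨v', B'⟩, hB'⟩ := x'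
  obtain rfl : v = v' := hv
  obtain rfl : B = B' := (hσ v).eq_of_mem_of_mem hB hB' hf hf'
  rfl

lemma eq_of_adj {x y x' y' : {p : V × Finset (Sym2 V) // p.2 ∈ σ p.1}}
    (hxy : (Fractured H σ).Adj x y) (hxy' : (Fractured H σ).Adj x' y')
    (hx : x.1.1 = x'.1.1) (hy : y.1.1 = y'.1.1) : x = x' :=
  hσ.vertex_eq hx hxy.2.1 (hx ▸ hy ▸ hxy'.2.1)

lemma bijOn_edgeSet :
    Set.BijOn (Sym2.map fun x => x.1.1) (Fractured H σ).edgeSet H.edgeSet := by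
  refine ⟨?_, ?_, ?_⟩
  · rintro ⟨x, y⟩ hxy
    exact hxy.1
  · rintro ⟨x, y⟩ hxy ⟨x', y'⟩ hxy' he
    rcases Sym2.eq_iff.1 he with ⟨hx, hy⟩ | ⟨hx, hy⟩
    · obtain rfl := hσ.eq_of_adj hxy hxy' hx hy
      obtain rfl := hσ.eq_of_adj hxy.symm hxy'.symm hy hx
      rfl
    · obtain rfl := hσ.eq_of_adj hxy hxy'.symm hx hy
      obtain rfl := hσ.eq_of_adj hxy.symm hxy' hy hx
      exact Sym2.eq_swap
  · rintro ⟨u, v⟩ huv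
    obtain ⟨B, hB, huB⟩ := (hσ u).exists_mem (mem_incEdges.2 ⟨huv, Sym2.mem_mk_left u v⟩)
    obtain ⟨B', hB', hvB'⟩ := (hσ v).exists_mem (mem_incEdges.2 ⟨huv, Sym2.mem_mk_right u v⟩)
    exact ⟨s(⟨(u, B), hB⟩, ⟨(v, B'), hB'⟩), ⟨huv, huB, hvB'⟩, rfl⟩

lemma mem_block_iff (x : {p : V × Finset (Sym2 V) // p.2 ∈ σ p.1}) {f : Sym2 V} :
    f ∈ x.1.2 ↔ ∃ y, (Fractured H σ).Adj x y ∧ s(x.1.1, y.1.1) = f := by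
  refine ⟨fun hf => ?_, fun ⟨y, hxy, hf⟩ => hf ▸ hxy.2.1⟩
  obtain ⟨hfH, hxf⟩ := mem_incEdges.1 ((hσ x.1.1).2.1 _ x.2 hf)
  obtain ⟨u, rfl⟩ := Sym2.mem_iff_exists.1 hxf
  obtain ⟨B, hB, hfB⟩ := (hσ u).exists_mem (mem_incEdges.2 ⟨hfH, Sym2.mem_mk_right _ _⟩)
  exact ⟨⟨(u, B), hB⟩, ⟨hfH, hf, hfB⟩, rfl⟩

end IsFracture

end Fracture

section Colourful

variable {V W : Type*} {H : SimpleGraph V} {h : W → V} {A A' : Finset (Sym2 W)}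

lemma Colourful.eq_of_subset (hA : Colourful H h A) (hA' : Colourful H h A') (hsub : A' ⊆ A) :
    A' = A := by
  refine hsub.antisymm fun e he => ?_
  obtain ⟨e', he', hee'⟩ := hA'.surjOn (hA.mapsTo he)
  rwa [← hA.injOn (hsub he') he hee']

variable [DecidableEq V] [DecidableEq W]

def edgeBlock (h : W → V) (A : Finset (Sym2 W)) (w : W) : Finset (Sym2 V) :=
  {e ∈ A | w ∈ e}.image (Sym2.map h)

def inducedFracture [Fintype W] (h : W → V) (A : Finset (Sym2 W)) (v : V) :
    Finset (Finset (Sym2 V)) :=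
  Finset.image (edgeBlock h A) {w | h w = v ∧ (edgeBlock h A w).Nonempty}

lemma mem_edgeBlock {w : W} {f : Sym2 V} :
    f ∈ edgeBlock h A w ↔ ∃ e ∈ A, w ∈ e ∧ Sym2.map h e = f := by
  simp [edgeBlock, and_assoc]

lemma mem_inducedFracture [Fintype W] {v : V} {B : Finset (Sym2 V)} :
    B ∈ inducedFracture h A v ↔ ∃ w, h w = v ∧ edgeBlock h A w = B ∧ B.Nonempty := by
  simp only [inducedFracture, mem_image, mem_filter, mem_univ, true_and]
  exact ⟨fun ⟨w, ⟨hw, hne⟩, hB⟩ => ⟨w, hw, hB, hB ▸ hne⟩,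
    fun ⟨w, hw, hB, hne⟩ => ⟨w, ⟨hw, hB ▸ hne⟩, hB⟩⟩

namespace Colourful

variable (hA : Colourful H h A)
include hA

lemma eq_of_mem_edgeBlock {w w' : W} (hw : h w = h w') {f : Sym2 V}
    (hf : f ∈ edgeBlock h A w) (hf' : f ∈ edgeBlock h A w') : w = w' := by
  obtain ⟨e, he, hwe, rfl⟩ := mem_edgeBlock.1 hf
  obtain ⟨e', he', hwe', hee'⟩ := mem_edgeBlock.1 hf'
  obtain rfl : e = e' := hA.injOn he he' hee'.symm
  by_contra hne
  have hH : Sym2.map h e ∈ H.edgeSet := hA.mapsTo he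
  rw [(Sym2.mem_and_mem_iff hne).1 ⟨hwe, hwe'⟩, Sym2.map_mk, SimpleGraph.mem_edgeSet] at hH
  exact hH.ne hw

lemma card_edgeBlock (w : W) : #(edgeBlock h A w) = #{e ∈ A | w ∈ e} :=
  card_image_of_injOn (hA.injOn.mono (filter_subset _ A))

lemma isFracture_inducedFracture [Fintype V] [Fintype W] [DecidableRel H.Adj] :
    IsFracture H (inducedFracture h A) := by
  intro v
  refine ⟨fun h0 => ?_, fun B hB f hf => ?_, fun f hf => ?_⟩
  · obtain ⟨-, -, -, hne⟩ := mem_inducedFracture.1 h0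
    exact not_nonempty_empty hne
  · obtain ⟨w, rfl, rfl, -⟩ := mem_inducedFracture.1 hB
    obtain ⟨e, he, hwe, rfl⟩ := mem_edgeBlock.1 hf
    exact mem_incEdges.2 ⟨hA.mapsTo he, Sym2.mem_map.2 ⟨w, hwe, rfl⟩⟩
  · obtain ⟨hfH, hvf⟩ := mem_incEdges.1 hf
    obtain ⟨e, he, rfl⟩ := hA.surjOn hfH
    obtain ⟨w, hwe, rfl⟩ := Sym2.mem_map.1 hvf
    have hfw : Sym2.map h e ∈ edgeBlock h A w := mem_edgeBlock.2 ⟨e, he, hwe, rfl⟩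
    refine ⟨edgeBlock h A w, ⟨mem_inducedFracture.2 ⟨w, rfl, rfl, ⟨_, hfw⟩⟩, hfw⟩, ?_⟩
    rintro B ⟨hB, hfB⟩
    obtain ⟨w', hw', rfl, -⟩ := mem_inducedFracture.1 hB
    rw [hA.eq_of_mem_edgeBlock hw' hfB hfw]

lemma prod_fiber_signature [Fintype W] {s : ℕ → ℂ} (hs : s 0 ≠ 0) (v : V) :
    ∏ w with h w = v, s #{e ∈ A | w ∈ e} =
      s 0 ^ #{w | h w = v} * ∏ B ∈ inducedFracture h A v, s #B / s 0 := by
  calc ∏ w with h w = v, s #{e ∈ A | w ∈ e}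
      = s 0 ^ #{w | h w = v} * ∏ w with h w = v, s #(edgeBlock h A w) / s 0 := by
        rw [prod_div_distrib, prod_const, mul_div_cancel₀ _ (pow_ne_zero _ hs)]
        simp only [hA.card_edgeBlock]
    _ = s 0 ^ #{w | h w = v} *
          ∏ w ∈ {w | h w = v} with (edgeBlock h A w).Nonempty, s #(edgeBlock h A w) / s 0 := by
        congr 1
        refine (prod_filter_of_ne fun w _ hw => ?_).symm
        contrapose! hw
        rw [hw, card_empty, div_self hs]
    _ = s 0 ^ #{w | h w = v} * ∏ B ∈ inducedFracture h A v, s #B / s 0 := by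
        rw [inducedFracture, prod_image, filter_filter]
        intro w hw w' hw' hww'
        obtain ⟨hwv, f, hf⟩ := (mem_filter.1 hw).2
        exact hA.eq_of_mem_edgeBlock (hwv.trans (mem_filter.1 hw').2.1.symm) hf (hww' ▸ hf)

lemma prod_signature [Fintype V] [Fintype W] {s : V → ℕ → ℂ} (hs : ∀ v, s v 0 ≠ 0) :
    ∏ w, s (h w) #{e ∈ A | w ∈ e} =
      (∏ v, s v 0 ^ #{w | h w = v}) * ∏ v, ∏ B ∈ inducedFracture h A v, s v #B / s v 0 := by
  rw [← prod_mul_distrib, ← prod_fiberwise univ h]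
  refine prod_congr rfl fun v _ => ?_
  rw [← hA.prod_fiber_signature (hs v)]
  exact prod_congr rfl fun w hw => by rw [(mem_filter.1 hw).2]

end Colourful

end Colourful

section Embedding

variable {V W : Type*} {H : SimpleGraph V} {G : SimpleGraph W} {h : W → V}
  {σ : V → Finset (Finset (Sym2 V))} {φ : {p : V × Finset (Sym2 V) // p.2 ∈ σ p.1} → W}

/-- The defining predicate of `embCP`. -/
def IsCPEmbedding (H : SimpleGraph V) (σ : V → Finset (Finset (Sym2 V))) (G : SimpleGraph W)
    (h : W → V) (φ : {p : V × Finset (Sym2 V) // p.2 ∈ σ p.1} → W) : Prop :=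
  Function.Injective φ ∧ (∀ x y, (Fractured H σ).Adj x y → G.Adj (φ x) (φ y)) ∧
    ∀ x, h (φ x) = x.1.1

open Classical in
noncomputable def embeddingEdges [Fintype V] (H : SimpleGraph V)
    (σ : V → Finset (Finset (Sym2 V))) (φ : {p : V × Finset (Sym2 V) // p.2 ∈ σ p.1} → W) :
    Finset (Sym2 W) :=
  (Fractured H σ).edgeFinset.image (Sym2.map φ)

variable [Fintype V]

lemma coe_embeddingEdges :
    (embeddingEdges H σ φ : Set (Sym2 W)) = Sym2.map φ '' (Fractured H σ).edgeSet := by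
  simp [embeddingEdges]

lemma mem_embeddingEdges {e : Sym2 W} :
    e ∈ embeddingEdges H σ φ ↔ ∃ x y, (Fractured H σ).Adj x y ∧ s(φ x, φ y) = e := by
  simp [embeddingEdges, Sym2.exists]

lemma embeddingEdges_subset_edgeFinset [Fintype W] [DecidableEq W] [DecidableRel G.Adj]
    (hφ : ∀ x y, (Fractured H σ).Adj x y → G.Adj (φ x) (φ y)) :
    embeddingEdges H σ φ ⊆ G.edgeFinset := by
  intro e he
  obtain ⟨x, y, hxy, rfl⟩ := mem_embeddingEdges.1 he
  exact SimpleGraph.mem_edgeFinset.2 (hφ x y hxy)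

lemma edgeBlock_embeddingEdges_of_notMem_range [DecidableEq V] [DecidableEq W] {w : W}
    (hw : w ∉ Set.range φ) : edgeBlock h (embeddingEdges H σ φ) w = ∅ := by
  refine eq_empty_of_forall_notMem fun f hf => ?_
  obtain ⟨e, he, hwe, -⟩ := mem_edgeBlock.1 hf
  obtain ⟨x, y, -, rfl⟩ := mem_embeddingEdges.1 he
  rcases Sym2.mem_iff.1 hwe with rfl | rfl
  exacts [hw ⟨x, rfl⟩, hw ⟨y, rfl⟩]

variable [DecidableEq V] [DecidableRel H.Adj] (hσ : IsFracture H σ)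
  (hinj : Function.Injective φ) (hcol : ∀ x, h (φ x) = x.1.1)
include hσ hinj hcol

lemma IsFracture.colourful_embeddingEdges : Colourful H h (embeddingEdges H σ φ) := by
  have hcomp : Sym2.map h ∘ Sym2.map φ = Sym2.map fun x => x.1.1 := by
    rw [← Sym2.map_comp]
    exact congrArg Sym2.map (funext hcol)
  rw [Colourful, coe_embeddingEdges, ← Set.bijOn_comp_iff (Sym2.map.injective hinj).injOn, hcomp]
  exact hσ.bijOn_edgeSet

lemma IsFracture.edgeBlock_embeddingEdges [DecidableEq W]
    (x : {p : V × Finset (Sym2 V) // p.2 ∈ σ p.1}) :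
    edgeBlock h (embeddingEdges H σ φ) (φ x) = x.1.2 := by
  ext f
  rw [mem_edgeBlock, hσ.mem_block_iff]
  constructor
  · rintro ⟨e, he, hxe, rfl⟩
    obtain ⟨a, b, hab, rfl⟩ := mem_embeddingEdges.1 he
    rcases Sym2.mem_iff.1 hxe with hxa | hxb
    · obtain rfl := hinj hxa
      exact ⟨b, hab, by rw [Sym2.map_mk, hcol, hcol]⟩
    · obtain rfl := hinj hxb
      exact ⟨a, hab.symm, by rw [Sym2.map_mk, hcol, hcol, Sym2.eq_swap]⟩
  · rintro ⟨y, hxy, rfl⟩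
    refine ⟨s(φ x, φ y), mem_embeddingEdges.2 ⟨x, y, hxy, rfl⟩, Sym2.mem_mk_left _ _, ?_⟩
    rw [Sym2.map_mk, hcol, hcol]

lemma IsFracture.inducedFracture_embeddingEdges [Fintype W] [DecidableEq W] :
    inducedFracture h (embeddingEdges H σ φ) = σ := by
  funext v
  ext B
  rw [mem_inducedFracture]
  constructor
  · rintro ⟨w, rfl, rfl, hne⟩
    obtain ⟨x, rfl⟩ : w ∈ Set.range φ :=
      by_contra fun hw => hne.ne_empty (edgeBlock_embeddingEdges_of_notMem_range hw)
    rw [hσ.edgeBlock_embeddingEdges hinj hcol, hcol]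
    exact x.2
  · intro hB
    refine ⟨φ ⟨(v, B), hB⟩, hcol _, hσ.edgeBlock_embeddingEdges hinj hcol _, ?_⟩
    exact nonempty_iff_ne_empty.2 fun hB0 => (hσ v).1 (hB0 ▸ hB)

end Embedding

section BlockVertex

variable {V W : Type*} [DecidableEq V] [Fintype W] [DecidableEq W] {H : SimpleGraph V}
  {h : W → V} {A : Finset (Sym2 W)} {σ : V → Finset (Finset (Sym2 V))}

noncomputable def blockVertex (hσA : inducedFracture h A = σ)
    (x : {p : V × Finset (Sym2 V) // p.2 ∈ σ p.1}) : W :=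
  (mem_inducedFracture.1 (hσA ▸ x.2 : x.1.2 ∈ inducedFracture h A x.1.1)).choose

lemma blockVertex_spec (hσA : inducedFracture h A = σ)
    (x : {p : V × Finset (Sym2 V) // p.2 ∈ σ p.1}) :
    h (blockVertex hσA x) = x.1.1 ∧ edgeBlock h A (blockVertex hσA x) = x.1.2 ∧ x.1.2.Nonempty :=
  (mem_inducedFracture.1 (hσA ▸ x.2 : x.1.2 ∈ inducedFracture h A x.1.1)).choose_spec

lemma blockVertex_injective (hσA : inducedFracture h A = σ) :
    Function.Injective (blockVertex hσA) := by
  intro x y hxy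
  obtain ⟨hx, hBx, -⟩ := blockVertex_spec hσA x
  obtain ⟨hy, hBy, -⟩ := blockVertex_spec hσA y
  exact Subtype.ext (Prod.ext (hx.symm.trans (hxy ▸ hy)) (hBx.symm.trans (hxy ▸ hBy)))

namespace Colourful

variable (hA : Colourful H h A) (hσA : inducedFracture h A = σ)
include hA hσA

lemma blockVertex_eq {x : {p : V × Finset (Sym2 V) // p.2 ∈ σ p.1}} {w : W}
    (hw : h w = x.1.1) (hwB : edgeBlock h A w = x.1.2) : blockVertex hσA x = w := by
  obtain ⟨hx, hBx, f, hf⟩ := blockVertex_spec hσA x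
  exact hA.eq_of_mem_edgeBlock (hx.trans hw.symm) (hBx ▸ hf) (hwB ▸ hf)

lemma mk_blockVertex_mem {x y : {p : V × Finset (Sym2 V) // p.2 ∈ σ p.1}}
    (hxy : (Fractured H σ).Adj x y) : s(blockVertex hσA x, blockVertex hσA y) ∈ A := by
  obtain ⟨hx, hBx, -⟩ := blockVertex_spec hσA x
  obtain ⟨hy, hBy, -⟩ := blockVertex_spec hσA y
  obtain ⟨e, he, hxe, hef⟩ := mem_edgeBlock.1 (hBx ▸ hxy.2.1)
  obtain ⟨e', he', hye', he'f⟩ := mem_edgeBlock.1 (hBy ▸ hxy.2.2)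
  obtain rfl : e = e' := hA.injOn he he' (hef.trans he'f.symm)
  have hne : blockVertex hσA x ≠ blockVertex hσA y := fun hxy' =>
    hxy.1.ne (by rw [← hx, ← hy, hxy'])
  rwa [← (Sym2.mem_and_mem_iff hne).1 ⟨hxe, hye'⟩]

lemma embeddingEdges_blockVertex [Fintype V] [DecidableRel H.Adj] :
    embeddingEdges H σ (blockVertex hσA) = A := by
  have hσ : IsFracture H σ := hσA ▸ hA.isFracture_inducedFracture
  refine hA.eq_of_subset (hσ.colourful_embeddingEdges (blockVertex_injective hσA)
    fun x => (blockVertex_spec hσA x).1) fun e he => ?_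
  obtain ⟨x, y, hxy, rfl⟩ := mem_embeddingEdges.1 he
  exact hA.mk_blockVertex_mem hσA hxy

end Colourful

end BlockVertex

section Counting

variable {V W : Type*} [Fintype V] [DecidableEq V] [Fintype W] [DecidableEq W]
  {H : SimpleGraph V} [DecidableRel H.Adj] {G : SimpleGraph W} [DecidableRel G.Adj] {h : W → V}
  {σ : V → Finset (Finset (Sym2 V))}

noncomputable def IsFracture.cpEmbeddingEquiv (hσ : IsFracture H σ) :
    {φ // IsCPEmbedding H σ G h φ} ≃
      {A : Finset (Sym2 W) // A ⊆ G.edgeFinset ∧ Colourful H h A ∧ inducedFracture h A = σ} where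
  toFun φ :=
    ⟨embeddingEdges H σ φ, embeddingEdges_subset_edgeFinset φ.2.2.1,
      hσ.colourful_embeddingEdges φ.2.1 φ.2.2.2, hσ.inducedFracture_embeddingEdges φ.2.1 φ.2.2.2⟩
  invFun A :=
    ⟨blockVertex A.2.2.2, blockVertex_injective A.2.2.2,
      fun _ _ hxy => SimpleGraph.mem_edgeFinset.1 (A.2.1 (A.2.2.1.mk_blockVertex_mem A.2.2.2 hxy)),
      fun x => (blockVertex_spec A.2.2.2 x).1⟩
  left_inv φ := by
    have hφ := φ.2
    refine Subtype.ext (funext fun x => ?_)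
    exact (hσ.colourful_embeddingEdges hφ.1 hφ.2.2).blockVertex_eq
      (hσ.inducedFracture_embeddingEdges hφ.1 hφ.2.2) (hφ.2.2 x)
      (hσ.edgeBlock_embeddingEdges hφ.1 hφ.2.2 x)
  right_inv A := Subtype.ext (A.2.2.1.embeddingEdges_blockVertex A.2.2.2)

open Classical in
lemma IsFracture.card_colourful_inducedFracture_eq_embCP (hσ : IsFracture H σ) :
    #{A ∈ G.edgeFinset.powerset.filter (Colourful H h) | inducedFracture h A = σ} =
      embCP H σ G h := by
  rw [← Nat.card_eq_finsetCard, embCP]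
  refine Nat.card_congr (hσ.cpEmbeddingEquiv.trans (Equiv.subtypeEquivRight fun A => ?_)).symm
  simp [and_assoc]

end Counting

open Classical in
theorem stmt17_general (H : SimpleGraph VH) [DecidableRel H.Adj]
    (G : SimpleGraph VG) [DecidableRel G.Adj]
    (h : VG → VH)
    (s : VH → ℕ → ℂ) (hs : ∀ v, s v 0 ≠ 0) :
    holant G H h s =
      (∏ v : VH, s v 0 ^ (Finset.univ.filter fun w => h w = v).card) *
        ∑ σ ∈ fracturesFinset H,
          (embCP H σ G h : ℂ) * ∏ v : VH, ∏ B ∈ σ v, s v B.card / s v 0 := by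
  have hmaps : ∀ A ∈ G.edgeFinset.powerset.filter (Colourful H h),
      inducedFracture h A ∈ fracturesFinset H := fun A hA =>
    mem_fracturesFinset.2 (mem_filter.1 hA).2.isFracture_inducedFracture
  rw [holant, mul_sum, ← sum_fiberwise_of_maps_to hmaps]
  refine sum_congr rfl fun σ hσ => ?_
  have hweight : ∀ A ∈ {A ∈ G.edgeFinset.powerset.filter (Colourful H h) |
      inducedFracture h A = σ}, ∏ w, s (h w) #{e ∈ A | w ∈ e} =
        (∏ v, s v 0 ^ #{w | h w = v}) * ∏ v, ∏ B ∈ σ v, s v #B / s v 0 := fun A hA => by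
    rw [(mem_filter.1 (mem_filter.1 hA).1).2.prod_signature hs, (mem_filter.1 hA).2]
  rw [sum_congr rfl hweight, sum_const,
    (mem_fracturesFinset.1 hσ).card_colourful_inducedFracture_eq_embCP, nsmul_eq_mul]
  ring

open Classical in
/-- `Holant(G,h,s⃗) = ∏_i s_i(0)^{n_i} · ∑_{σ⃗} #Emb_cp(H↿σ⃗ → (G,h)) ·
∏_i ∏_{B ∈ σ⃗(v_i)} s_i(|B|)/s_i(0)`, the sum being over all fractures `σ⃗` of `H`. -/
theorem stmt17 (H : SimpleGraph VH) [DecidableRel H.Adj]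
    (G : SimpleGraph VG) [DecidableRel G.Adj]
    (h : VG → VH) (hhom : ∀ u w, G.Adj u w → H.Adj (h u) (h w))
    (hnoiso : ∀ v : VH, ∃ u, H.Adj v u)
    (s : VH → ℕ → ℂ) (hs : ∀ v, s v 0 ≠ 0) :
    holant G H h s =
      (∏ v : VH, s v 0 ^ (Finset.univ.filter fun w => h w = v).card) *
        ∑ σ ∈ fracturesFinset H,
          (embCP H σ G h : ℂ) * ∏ v : VH, ∏ B ∈ σ v, s v B.card / s v 0 :=
  stmt17_general H G h s hs
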